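/- If every proper bipartition of a coalition S has strictly positive cut (Σ_{i∈C, j∈C̄} w(i,j) > 0 for all nonempty disjoint C, C̄ with C ∪ C̄ = S), then S is 'indivisible': v(S) > Σ_{B ∈ P} v(B) for every partition P of S with at least two blocks. -/
import Mathlib


open Finset

noncomputable def gameValue {α : Type*} (w : α → α → ℝ) (C : Finset α) : ℝ :=
  (∑ i ∈ C, ∑ j ∈ C, w i j) / 2

/-- A partition of the coalition `S` into nonempty pairwise disjoint blocks. -/
def IsPartitionOf {α : Type*} [DecidableEq α] (P : Finset (Finset α))
    (S : Finset α) : Prop :=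
  ∅ ∉ P ∧ P.sup id = S ∧ ∀ C ∈ P, ∀ D ∈ P, C ≠ D → C ∩ D = ∅

/-- if every proper bipartition of `S` has strictly positive cut,
then `S` is indivisible: `v(S)` strictly exceeds the value of every partition
of `S` with at least two blocks. -/
theorem stmt_18 {α : Type*} [DecidableEq α] (w : α → α → ℝ)
    (hsym : ∀ i j, w i j = w j i) (hdiag : ∀ i, w i i = 0) (S : Finset α)
    (hcut : ∀ C Cb : Finset α, C.Nonempty → Cb.Nonempty → C ∩ Cb = ∅ →
      C ∪ Cb = S → 0 < ∑ i ∈ C, ∑ j ∈ Cb, w i j) :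
    ∀ P : Finset (Finset α), IsPartitionOf P S → 2 ≤ P.card →
      ∑ B ∈ P, gameValue w B < gameValue w S := by
  intro P hP hcard
  obtain ⟨hne, hsup, hdisj⟩ := hP
  have hpd : (↑P : Set (Finset α)).PairwiseDisjoint id := by
    intro C hC D hD hCD
    simpa [Finset.disjoint_iff_inter_eq_empty] using hdisj C hC D hD hCD
  have hS : S = P.biUnion id := by rw [← hsup, Finset.sup_eq_biUnion]
  have hsub : ∀ B ∈ P, B ⊆ S := by
    intro B hB
    rw [← hsup]; exact Finset.le_sup (f := id) hB
  -- split the inner sum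
  have key : ∑ i ∈ S, ∑ j ∈ S, w i j
      = ∑ B ∈ P, ((∑ i ∈ B, ∑ j ∈ B, w i j) + ∑ i ∈ B, ∑ j ∈ S \ B, w i j) := by
    conv_lhs => rw [hS]
    rw [Finset.sum_biUnion hpd]
    refine Finset.sum_congr rfl ?_
    intro B hB
    have : ∀ i ∈ B, (∑ j ∈ S, w i j)
        = (∑ j ∈ B, w i j) + ∑ j ∈ S \ B, w i j := by
      intro i _
      rw [add_comm, Finset.sum_sdiff (hsub B hB)]
    calc (∑ i ∈ (id B : Finset α), ∑ j ∈ P.biUnion id, w i j)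
        = ∑ i ∈ B, ∑ j ∈ S, w i j := by rw [← hS]; rfl
      _ = ∑ i ∈ B, ((∑ j ∈ B, w i j) + ∑ j ∈ S \ B, w i j) :=
          Finset.sum_congr rfl this
      _ = _ := by rw [Finset.sum_add_distrib]
  have hcutpos : ∀ B ∈ P, 0 < ∑ i ∈ B, ∑ j ∈ S \ B, w i j := by
    intro B hB
    have hBne : B.Nonempty := by
      rcases Finset.eq_empty_or_nonempty B with h | h
      · exact absurd (h ▸ hB) hne
      · exact h
    have hBCne : (S \ B).Nonempty := by
      obtain ⟨D, hD, hDB⟩ : ∃ D ∈ P, D ≠ B := by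
        obtain ⟨x, hx, y, hy, hxy⟩ := Finset.one_lt_card.mp hcard
        rcases eq_or_ne x B with rfl | h
        · exact ⟨y, hy, fun h => hxy h.symm⟩
        · exact ⟨x, hx, h⟩
      have hDne : D.Nonempty := by
        rcases Finset.eq_empty_or_nonempty D with h | h
        · exact absurd (h ▸ hD) hne
        · exact h
      obtain ⟨x, hx⟩ := hDne
      refine ⟨x, Finset.mem_sdiff.mpr ⟨hsub D hD hx, ?_⟩⟩
      intro hxB
      have := hdisj D hD B hB hDB
      have : x ∈ D ∩ B := Finset.mem_inter.mpr ⟨hx, hxB⟩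
      simp_all
    exact hcut B (S \ B) hBne hBCne (Finset.inter_sdiff_self _ _)
      (Finset.union_sdiff_of_subset (hsub B hB))
  have hPne : P.Nonempty := Finset.card_pos.mp (by omega)
  have hsumpos : 0 < ∑ B ∈ P, ∑ i ∈ B, ∑ j ∈ S \ B, w i j :=
    Finset.sum_pos hcutpos hPne
  unfold gameValue
  rw [key, Finset.sum_add_distrib, ← Finset.sum_div]
  linarith
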